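/- Let A be a finite-dimensional algebra over a field F that is mixing or sliding, and let S ⊆ A. If Lin_m(S) = Lin_{m+1}(S) for some m ≥ 0, then Lin_k(S) = Lin_m(S) for all k ≥ m; in particular Lin_∞(S) = Lin_m(S). -/
import Mathlib


open Pointwise

namespace DescLength

variable (F : Type*) [Field F] {A : Type*} [NonUnitalNonAssocRing A] [Module F A]

/-- `Word S n a` means that `a` is a word of length `n` in letters from `S`,
i.e. a product of `n` elements of `S` with some arrangement of brackets. -/
inductive Word (S : Set A) : ℕ → A → Prop
  | of {a : A} : a ∈ S → Word S 1 a
  | mul {m n : ℕ} {a b : A} : Word S m a → Word S n b → Word S (m + n) (a * b)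

/-- The set of words of length exactly `n` in letters from `S`. -/
def words (S : Set A) (n : ℕ) : Set A := {a | Word S n a}

/-- `Lin_k(S)`, where the submodule `o` plays the role of `Lin_0(S)`:
`o = ⊥` if `A` is non-unital and `o = span F {e}` if `A` is unital with unity `e`. -/
def lin (o : Submodule F A) (S : Set A) (k : ℕ) : Submodule F A :=
  o ⊔ Submodule.span F (⋃ i ∈ Finset.Icc 1 k, words S i)

/-- `Lin_∞(S)`. -/
def linInfty (o : Submodule F A) (S : Set A) : Submodule F A := ⨆ k, lin F o S k

/-- `S` is a generating set for `A`. -/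
def Generates (o : Submodule F A) (S : Set A) : Prop := linInfty F o S = ⊤

/-- The length of the set `S`: `l(S) = min {k | Lin_k(S) = Lin_∞(S)}`. -/
noncomputable def len (o : Submodule F A) (S : Set A) : ℕ := sInf {k | lin F o S k = linInfty F o S}

/-- The length of the algebra `A`: `l(A) = max {l(S) | S generates A}`. -/
noncomputable def algLen (o : Submodule F A) : ℕ := sSup {n | ∃ S : Set A, Generates F o S ∧ len F o S = n}

/-- The sequence of differences `d_k(S)`. -/
noncomputable def dseq (o : Submodule F A) (S : Set A) : ℕ → ℕ
  | 0 => Module.finrank F o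
  | k + 1 => Module.finrank F (lin F o S (k + 1)) - Module.finrank F (lin F o S k)

/-- `o` is the span of the words of length zero: `⊥` if `A` has no two-sided unity,
and the span of the unity `e` otherwise. -/
def IsUnitalSpan (o : Submodule F A) : Prop :=
  ((¬ ∃ e : A, ∀ x : A, e * x = x ∧ x * e = x) ∧ o = ⊥) ∨
  (∃ e : A, (∀ x : A, e * x = x ∧ x * e = x) ∧ o = Submodule.span F {e})

def Ql (x y z : A) : Set A :=
  {x*(z*y), x*(y*z), y*(x*z), y*(z*x), x*y, y*x, x*z, z*x, y*z, z*y, x, y, z}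

def Qr (x y z : A) : Set A :=
  {(x*z)*y, (z*x)*y, (y*z)*x, (z*y)*x, x*y, y*x, x*z, z*x, y*z, z*y, x, y, z}

def Pset (x y z : A) : Set A := Ql x y z ∪ Qr x y z

/-- `A` is mixing: `(xy)z, z(xy) ∈ Lin_1(P(x,y,z))` for all `x, y, z`. -/
def IsMixing (o : Submodule F A) : Prop :=
  ∀ x y z : A, (x*y)*z ∈ o ⊔ Submodule.span F (Pset x y z) ∧
    z*(x*y) ∈ o ⊔ Submodule.span F (Pset x y z)

/-- `A` is left sliding: `(xy)z ∈ Lin_1(Q_l(x,y,z))` for all `x, y, z`. -/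
def IsLeftSliding (o : Submodule F A) : Prop :=
  ∀ x y z : A, (x*y)*z ∈ o ⊔ Submodule.span F (Ql x y z)

/-- `A` is right sliding: `z(xy) ∈ Lin_1(Q_r(x,y,z))` for all `x, y, z`. -/
def IsRightSliding (o : Submodule F A) : Prop :=
  ∀ x y z : A, z*(x*y) ∈ o ⊔ Submodule.span F (Qr x y z)

/-- `Lin_1(a, b, aa, ab, ba)`. -/
def lin1five (o : Submodule F A) (a b : A) : Submodule F A :=
  o ⊔ Submodule.span F {a, b, a*a, a*b, b*a}

/-- `Lin'_2(a, b, c)`. -/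
def lin2' (o : Submodule F A) (a b c : A) : Submodule F A :=
  o ⊔ Submodule.span F {a, b, c, a*b, b*a, b*c, c*b, a*c, c*a}

/-- `A` is descendingly flexible. -/
def IsDescFlexible (o : Submodule F A) : Prop :=
  ∀ a b c : A, (a*b)*a ∈ lin1five F o a b ∧ a*(b*a) ∈ lin1five F o a b ∧
    (a*b)*c + (c*b)*a ∈ lin2' F o a b c ∧ a*(b*c) + c*(b*a) ∈ lin2' F o a b c

/-- `A` is descendingly alternative. -/
def IsDescAlternative (o : Submodule F A) : Prop :=
  ∀ a b c : A, (b*a)*a ∈ lin1five F o a b ∧ a*(a*b) ∈ lin1five F o a b ∧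
    (a*b)*c + (a*c)*b ∈ lin2' F o a b c ∧ a*(b*c) + b*(a*c) ∈ lin2' F o a b c

/-- `S^{(m)}`: the words obtained from a letter of `S` by repeatedly multiplying by a single
letter of `S`, on the left or on the right. -/
def chainWords (S : Set A) : ℕ → Set A
  | 0 => ∅
  | 1 => S
  | n + 2 => chainWords S (n + 1) * S ∪ S * chainWords S (n + 1)


section Aux

variable {F₀ : Type*} [Field F₀] {A₀ : Type*} [NonUnitalNonAssocRing A₀] [Module F₀ A₀]

theorem Word.one_le' {S : Set A₀} {n : ℕ} {a : A₀} (h : Word S n a) : 1 ≤ n := by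
  induction h with
  | of _ => exact le_refl 1
  | mul _ _ ih1 ih2 => omega

theorem Word.exists_split {S : Set A₀} {k : ℕ} {w : A₀} (hw : Word S k w) (hk : 2 ≤ k) :
    ∃ p q : ℕ, ∃ a b : A₀, Word S p a ∧ Word S q b ∧ p + q = k ∧ w = a * b := by
  cases hw with
  | of hs => omega
  | @mul p q a b hu hv => exact ⟨p, q, a, b, hu, hv, rfl, rfl⟩

theorem word_mem_lin (o : Submodule F₀ A₀) {S : Set A₀} {t k : ℕ} {w : A₀}
    (h : Word S t w) (hk : t ≤ k) : w ∈ lin F₀ o S k :=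
  Submodule.mem_sup_right (Submodule.subset_span
    (Set.mem_iUnion₂.2 ⟨t, Finset.mem_Icc.2 ⟨h.one_le', hk⟩, h⟩))

theorem o_le_lin (o : Submodule F₀ A₀) (S : Set A₀) (k : ℕ) : o ≤ lin F₀ o S k :=
  le_sup_left

theorem lin_mono (o : Submodule F₀ A₀) (S : Set A₀) {k l : ℕ} (h : k ≤ l) :
    lin F₀ o S k ≤ lin F₀ o S l := by
  apply sup_le_sup_left
  apply Submodule.span_mono
  intro x hx
  rw [Set.mem_iUnion₂] at hx ⊢
  obtain ⟨i, hi, hx⟩ := hx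
  rw [Finset.mem_Icc] at hi
  exact ⟨i, Finset.mem_Icc.2 ⟨hi.1, hi.2.trans h⟩, hx⟩

/-- `s*w` and `w*s` for `s ∈ S` and `w` a word of length `n`. -/
def Eset (S : Set A₀) (n : ℕ) : Set A₀ :=
  {p | ∃ s ∈ S, ∃ w, Word S n w ∧ (p = s * w ∨ p = w * s)}

theorem word_reduce_left {o : Submodule F₀ A₀} (hL : IsLeftSliding F₀ o) (S : Set A₀) (n : ℕ) :
    ∀ i j : ℕ, ∀ u v : A₀, Word S i u → Word S j v → i + j = n + 1 →
      u * v ∈ lin F₀ o S n ⊔ Submodule.span F₀ (Eset S n) := by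
  intro i
  induction i using Nat.strong_induction_on with
  | _ i IH =>
  intro j u v hu hv hn
  have short : ∀ {t : ℕ} {w : A₀}, Word S t w → t ≤ n →
      w ∈ lin F₀ o S n ⊔ Submodule.span F₀ (Eset S n) :=
    fun hw ht => Submodule.mem_sup_left (word_mem_lin o hw ht)
  cases hu with
  | of hs =>
    have hj : j = n := by omega
    subst hj
    exact Submodule.mem_sup_right (Submodule.subset_span ⟨u, hs, v, hv, Or.inl rfl⟩)
  | @mul p q a b hu1 hu2 =>
    have h1 := hu1.one_le'
    have h2 := hu2.one_le'
    have h3 := hv.one_le'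
    have key := hL a b v
    have hle : o ⊔ Submodule.span F₀ (Ql a b v) ≤
        lin F₀ o S n ⊔ Submodule.span F₀ (Eset S n) := by
      apply sup_le ((o_le_lin o S n).trans le_sup_left)
      rw [Submodule.span_le]
      intro x hx
      simp only [Ql, Set.mem_insert_iff, Set.mem_singleton_iff] at hx
      rcases hx with rfl|rfl|rfl|rfl|rfl|rfl|rfl|rfl|rfl|rfl|rfl|rfl|rfl
      · exact IH p (by omega) (j + q) a (v * b) hu1 (hv.mul hu2) (by omega)
      · exact IH p (by omega) (q + j) a (b * v) hu1 (hu2.mul hv) (by omega)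
      · exact IH q (by omega) (p + j) b (a * v) hu2 (hu1.mul hv) (by omega)
      · exact IH q (by omega) (j + p) b (v * a) hu2 (hv.mul hu1) (by omega)
      · exact short (hu1.mul hu2) (by omega)
      · exact short (hu2.mul hu1) (by omega)
      · exact short (hu1.mul hv) (by omega)
      · exact short (hv.mul hu1) (by omega)
      · exact short (hu2.mul hv) (by omega)
      · exact short (hv.mul hu2) (by omega)
      · exact short hu1 (by omega)
      · exact short hu2 (by omega)
      · exact short hv (by omega)
    exact hle key

theorem word_reduce_right {o : Submodule F₀ A₀} (hR : IsRightSliding F₀ o) (S : Set A₀) (n : ℕ) :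
    ∀ j i : ℕ, ∀ u v : A₀, Word S i u → Word S j v → i + j = n + 1 →
      u * v ∈ lin F₀ o S n ⊔ Submodule.span F₀ (Eset S n) := by
  intro j
  induction j using Nat.strong_induction_on with
  | _ j IH =>
  intro i u v hu hv hn
  have short : ∀ {t : ℕ} {w : A₀}, Word S t w → t ≤ n →
      w ∈ lin F₀ o S n ⊔ Submodule.span F₀ (Eset S n) :=
    fun hw ht => Submodule.mem_sup_left (word_mem_lin o hw ht)
  cases hv with
  | of hs =>
    have hi : i = n := by omega
    subst hi
    exact Submodule.mem_sup_right (Submodule.subset_span ⟨v, hs, u, hu, Or.inr rfl⟩)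
  | @mul p q a b hv1 hv2 =>
    have h1 := hv1.one_le'
    have h2 := hv2.one_le'
    have h3 := hu.one_le'
    have key := hR a b u
    have hle : o ⊔ Submodule.span F₀ (Qr a b u) ≤
        lin F₀ o S n ⊔ Submodule.span F₀ (Eset S n) := by
      apply sup_le ((o_le_lin o S n).trans le_sup_left)
      rw [Submodule.span_le]
      intro x hx
      simp only [Qr, Set.mem_insert_iff, Set.mem_singleton_iff] at hx
      rcases hx with rfl|rfl|rfl|rfl|rfl|rfl|rfl|rfl|rfl|rfl|rfl|rfl|rfl
      · exact IH q (by omega) (p + i) (a * u) b (hv1.mul hu) hv2 (by omega)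
      · exact IH q (by omega) (i + p) (u * a) b (hu.mul hv1) hv2 (by omega)
      · exact IH p (by omega) (q + i) (b * u) a (hv2.mul hu) hv1 (by omega)
      · exact IH p (by omega) (i + q) (u * b) a (hu.mul hv2) hv1 (by omega)
      · exact short (hv1.mul hv2) (by omega)
      · exact short (hv2.mul hv1) (by omega)
      · exact short (hv1.mul hu) (by omega)
      · exact short (hu.mul hv1) (by omega)
      · exact short (hv2.mul hu) (by omega)
      · exact short (hu.mul hv2) (by omega)
      · exact short hv1 (by omega)
      · exact short hv2 (by omega)
      · exact short hu (by omega)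
    exact hle key

theorem word_reduce_mix {o : Submodule F₀ A₀} (hM : IsMixing F₀ o) (S : Set A₀) (n : ℕ) :
    ∀ d i j : ℕ, ∀ u v : A₀, min i j ≤ d → Word S i u → Word S j v → i + j = n + 1 →
      u * v ∈ lin F₀ o S n ⊔ Submodule.span F₀ (Eset S n) := by
  intro d
  induction d using Nat.strong_induction_on with
  | _ d IH =>
  intro i j u v hd hu hv hn
  have short : ∀ {t : ℕ} {w : A₀}, Word S t w → t ≤ n →
      w ∈ lin F₀ o S n ⊔ Submodule.span F₀ (Eset S n) :=
    fun hw ht => Submodule.mem_sup_left (word_mem_lin o hw ht)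
  rcases le_or_gt i j with hij | hij
  · cases hu with
    | of hs =>
      have hj : j = n := by omega
      subst hj
      exact Submodule.mem_sup_right (Submodule.subset_span ⟨u, hs, v, hv, Or.inl rfl⟩)
    | @mul p q a b hu1 hu2 =>
      have h1 := hu1.one_le'
      have h2 := hu2.one_le'
      have h3 := hv.one_le'
      have key := (hM a b v).1
      have hle : o ⊔ Submodule.span F₀ (Pset a b v) ≤
          lin F₀ o S n ⊔ Submodule.span F₀ (Eset S n) := by
        apply sup_le ((o_le_lin o S n).trans le_sup_left)
        rw [Submodule.span_le]
        intro x hx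
        simp only [Pset, Ql, Qr, Set.mem_union, Set.mem_insert_iff,
          Set.mem_singleton_iff] at hx
        rcases hx with (rfl|rfl|rfl|rfl|rfl|rfl|rfl|rfl|rfl|rfl|rfl|rfl|rfl)|
          (rfl|rfl|rfl|rfl|rfl|rfl|rfl|rfl|rfl|rfl|rfl|rfl|rfl)
        · exact IH p (by omega) p (j + q) a (v * b) (by omega) hu1 (hv.mul hu2) (by omega)
        · exact IH p (by omega) p (q + j) a (b * v) (by omega) hu1 (hu2.mul hv) (by omega)
        · exact IH q (by omega) q (p + j) b (a * v) (by omega) hu2 (hu1.mul hv) (by omega)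
        · exact IH q (by omega) q (j + p) b (v * a) (by omega) hu2 (hv.mul hu1) (by omega)
        · exact short (hu1.mul hu2) (by omega)
        · exact short (hu2.mul hu1) (by omega)
        · exact short (hu1.mul hv) (by omega)
        · exact short (hv.mul hu1) (by omega)
        · exact short (hu2.mul hv) (by omega)
        · exact short (hv.mul hu2) (by omega)
        · exact short hu1 (by omega)
        · exact short hu2 (by omega)
        · exact short hv (by omega)
        · exact IH q (by omega) (p + j) q (a * v) b (by omega) (hu1.mul hv) hu2 (by omega)
        · exact IH q (by omega) (j + p) q (v * a) b (by omega) (hv.mul hu1) hu2 (by omega)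
        · exact IH p (by omega) (q + j) p (b * v) a (by omega) (hu2.mul hv) hu1 (by omega)
        · exact IH p (by omega) (j + q) p (v * b) a (by omega) (hv.mul hu2) hu1 (by omega)
        · exact short (hu1.mul hu2) (by omega)
        · exact short (hu2.mul hu1) (by omega)
        · exact short (hu1.mul hv) (by omega)
        · exact short (hv.mul hu1) (by omega)
        · exact short (hu2.mul hv) (by omega)
        · exact short (hv.mul hu2) (by omega)
        · exact short hu1 (by omega)
        · exact short hu2 (by omega)
        · exact short hv (by omega)
      exact hle key
  · cases hv with
    | of hs =>
      have hi : i = n := by omega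
      subst hi
      exact Submodule.mem_sup_right (Submodule.subset_span ⟨v, hs, u, hu, Or.inr rfl⟩)
    | @mul p q a b hv1 hv2 =>
      have h1 := hv1.one_le'
      have h2 := hv2.one_le'
      have h3 := hu.one_le'
      have key := (hM a b u).2
      have hle : o ⊔ Submodule.span F₀ (Pset a b u) ≤
          lin F₀ o S n ⊔ Submodule.span F₀ (Eset S n) := by
        apply sup_le ((o_le_lin o S n).trans le_sup_left)
        rw [Submodule.span_le]
        intro x hx
        simp only [Pset, Ql, Qr, Set.mem_union, Set.mem_insert_iff,
          Set.mem_singleton_iff] at hx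
        rcases hx with (rfl|rfl|rfl|rfl|rfl|rfl|rfl|rfl|rfl|rfl|rfl|rfl|rfl)|
          (rfl|rfl|rfl|rfl|rfl|rfl|rfl|rfl|rfl|rfl|rfl|rfl|rfl)
        · exact IH p (by omega) p (i + q) a (u * b) (by omega) hv1 (hu.mul hv2) (by omega)
        · exact IH p (by omega) p (q + i) a (b * u) (by omega) hv1 (hv2.mul hu) (by omega)
        · exact IH q (by omega) q (p + i) b (a * u) (by omega) hv2 (hv1.mul hu) (by omega)
        · exact IH q (by omega) q (i + p) b (u * a) (by omega) hv2 (hu.mul hv1) (by omega)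
        · exact short (hv1.mul hv2) (by omega)
        · exact short (hv2.mul hv1) (by omega)
        · exact short (hv1.mul hu) (by omega)
        · exact short (hu.mul hv1) (by omega)
        · exact short (hv2.mul hu) (by omega)
        · exact short (hu.mul hv2) (by omega)
        · exact short hv1 (by omega)
        · exact short hv2 (by omega)
        · exact short hu (by omega)
        · exact IH q (by omega) (p + i) q (a * u) b (by omega) (hv1.mul hu) hv2 (by omega)
        · exact IH q (by omega) (i + p) q (u * a) b (by omega) (hu.mul hv1) hv2 (by omega)
        · exact IH p (by omega) (q + i) p (b * u) a (by omega) (hv2.mul hu) hv1 (by omega)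
        · exact IH p (by omega) (i + q) p (u * b) a (by omega) (hu.mul hv2) hv1 (by omega)
        · exact short (hv1.mul hv2) (by omega)
        · exact short (hv2.mul hv1) (by omega)
        · exact short (hv1.mul hu) (by omega)
        · exact short (hu.mul hv1) (by omega)
        · exact short (hv2.mul hu) (by omega)
        · exact short (hu.mul hv2) (by omega)
        · exact short hv1 (by omega)
        · exact short hv2 (by omega)
        · exact short hu (by omega)
      exact hle key

theorem word_reduce {o : Submodule F₀ A₀}
    (halg : IsMixing F₀ o ∨ IsLeftSliding F₀ o ∨ IsRightSliding F₀ o)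
    {S : Set A₀} {n i j : ℕ} {u v : A₀} (hu : Word S i u) (hv : Word S j v)
    (hn : i + j = n + 1) :
    u * v ∈ lin F₀ o S n ⊔ Submodule.span F₀ (Eset S n) := by
  rcases halg with hM | hL | hR
  · exact word_reduce_mix hM S n (min i j) i j u v le_rfl hu hv hn
  · exact word_reduce_left hL S n i j u v hu hv hn
  · exact word_reduce_right hR S n j i u v hu hv hn

section Mul

variable [SMulCommClass F₀ A₀ A₀] [IsScalarTower F₀ A₀ A₀]

theorem mul_left_mem_lin {o : Submodule F₀ A₀} (ho : IsUnitalSpan F₀ o) {S : Set A₀}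
    {k : ℕ} {s x : A₀} (hs : s ∈ S) (hx : x ∈ lin F₀ o S k) : s * x ∈ lin F₀ o S (k + 1) := by
  rcases Submodule.mem_sup.1 hx with ⟨y, hy, z, hz, rfl⟩
  clear hx
  rw [mul_add]
  apply add_mem
  · rcases ho with ⟨-, rfl⟩ | ⟨e, he, rfl⟩
    · rw [Submodule.mem_bot] at hy
      rw [hy, mul_zero]
      exact zero_mem _
    · rcases Submodule.mem_span_singleton.1 hy with ⟨c, rfl⟩
      rw [mul_smul_comm, (he s).2]
      exact Submodule.smul_mem _ _ (word_mem_lin _ (Word.of hs) (by omega))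
  · induction hz using Submodule.span_induction with
    | mem w hw =>
      rw [Set.mem_iUnion₂] at hw
      obtain ⟨t, ht, hw⟩ := hw
      rw [Finset.mem_Icc] at ht
      exact word_mem_lin o ((Word.of hs).mul hw) (by omega)
    | zero => rw [mul_zero]; exact zero_mem _
    | add w₁ w₂ _ _ ih1 ih2 => rw [mul_add]; exact add_mem ih1 ih2
    | smul c w _ ih => rw [mul_smul_comm]; exact Submodule.smul_mem _ _ ih

theorem mul_right_mem_lin {o : Submodule F₀ A₀} (ho : IsUnitalSpan F₀ o) {S : Set A₀}
    {k : ℕ} {s x : A₀} (hs : s ∈ S) (hx : x ∈ lin F₀ o S k) : x * s ∈ lin F₀ o S (k + 1) := by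
  rcases Submodule.mem_sup.1 hx with ⟨y, hy, z, hz, rfl⟩
  clear hx
  rw [add_mul]
  apply add_mem
  · rcases ho with ⟨-, rfl⟩ | ⟨e, he, rfl⟩
    · rw [Submodule.mem_bot] at hy
      rw [hy, zero_mul]
      exact zero_mem _
    · rcases Submodule.mem_span_singleton.1 hy with ⟨c, rfl⟩
      rw [smul_mul_assoc, (he s).1]
      exact Submodule.smul_mem _ _ (word_mem_lin _ (Word.of hs) (by omega))
  · induction hz using Submodule.span_induction with
    | mem w hw =>
      rw [Set.mem_iUnion₂] at hw
      obtain ⟨t, ht, hw⟩ := hw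
      rw [Finset.mem_Icc] at ht
      exact word_mem_lin o (hw.mul (Word.of hs)) (by omega)
    | zero => rw [zero_mul]; exact zero_mem _
    | add w₁ w₂ _ _ ih1 ih2 => rw [add_mul]; exact add_mem ih1 ih2
    | smul c w _ ih => rw [smul_mul_assoc]; exact Submodule.smul_mem _ _ ih

theorem stab_step {o : Submodule F₀ A₀} (ho : IsUnitalSpan F₀ o)
    (halg : IsMixing F₀ o ∨ IsLeftSliding F₀ o ∨ IsRightSliding F₀ o)
    {S : Set A₀} {m : ℕ} (h : lin F₀ o S (m + 1) ≤ lin F₀ o S m) :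
    lin F₀ o S (m + 2) ≤ lin F₀ o S (m + 1) := by
  apply sup_le (o_le_lin o S (m + 1))
  rw [Submodule.span_le]
  intro w hw
  rw [Set.mem_iUnion₂] at hw
  obtain ⟨t, ht, hw⟩ := hw
  rw [Finset.mem_Icc] at ht
  rcases Nat.lt_or_ge t (m + 2) with ht2 | ht2
  · exact word_mem_lin o hw (by omega)
  · obtain ⟨p, q, a, b, hu, hv, hpq, rfl⟩ := hw.exists_split (by omega)
    have hred := word_reduce halg hu hv (n := m + 1) (by omega)
    refine (sup_le le_rfl ?_ : lin F₀ o S (m + 1) ⊔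
      Submodule.span F₀ (Eset S (m + 1)) ≤ lin F₀ o S (m + 1)) hred
    rw [Submodule.span_le]
    rintro x ⟨s, hs, w', hw', rfl | rfl⟩
    · exact mul_left_mem_lin ho hs (h (word_mem_lin o hw' le_rfl))
    · exact mul_right_mem_lin ho hs (h (word_mem_lin o hw' le_rfl))

end Mul

end Aux

/-- If `A` is mixing or sliding and `Lin_m(S) = Lin_{m+1}(S)` for some `m ≥ 0`,
then `Lin_k(S) = Lin_m(S)` for all `k ≥ m`; in particular `Lin_∞(S) = Lin_m(S)`. -/
theorem lin_stabilizes_of_mixing_or_sliding {F A : Type*} [Field F] [NonUnitalNonAssocRing A]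
    [Module F A] [SMulCommClass F A A] [IsScalarTower F A A] [FiniteDimensional F A]
    (o : Submodule F A) (ho : IsUnitalSpan F o)
    (halg : IsMixing F o ∨ IsLeftSliding F o ∨ IsRightSliding F o)
    (S : Set A) (m : ℕ) (h : lin F o S m = lin F o S (m + 1)) :
    (∀ k : ℕ, m ≤ k → lin F o S k = lin F o S m) ∧ linInfty F o S = lin F o S m := by
  have key : ∀ k : ℕ, lin F o S (m + k) = lin F o S m := by
    intro k
    induction k with
    | zero => rfl
    | succ k ih =>
      refine le_antisymm ?_ (lin_mono o S (Nat.le_add_right m (k + 1)))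
      match k, ih with
      | 0, _ => exact h.ge
      | (k' + 1), ih =>
        have h1 : lin F o S (m + k' + 1) ≤ lin F o S (m + k') :=
          ih.le.trans (lin_mono o S (Nat.le_add_right m k'))
        exact (stab_step ho halg h1).trans (ih.le.trans (lin_mono o S le_rfl))
  have main : ∀ k : ℕ, m ≤ k → lin F o S k = lin F o S m := by
    intro k hk
    have := key (k - m)
    rwa [show m + (k - m) = k by omega] at this
  refine ⟨main, le_antisymm (iSup_le fun k => ?_) (le_iSup (fun k => lin F o S k) m)⟩
  rcases le_total k m with hk | hk
  · exact lin_mono o S hk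
  · exact (main k hk).le

end DescLength
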